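/- arXiv:1710.01184 — 2 statements merged into one kernel-verified Lean document; each statement's English description precedes it below -/
import Mathlib

section
/- Gauge transformation of the x-part: if μ satisfies μ_x + iθ₁[σ₃, μ] = (Q₀ + Q₁/k)μ with Q₀ = −(i(u_x+u_t)/4)σ₂, Q₁ = (i sin u/4)σ₁ + (i(cos u −1)/4)σ₃, and G = [[cos(u/2), −sin(u/2)],[sin(u/2), cos(u/2)]], then μ̂ := G^{-1}μ satisfies μ̂_x + iθ₁[σ₃, μ̂] = (Q̂₀ + kQ̂₁)μ̂ where Q̂₀ = (i(u_x−u_t)/4)σ₂ and Q̂₁ = (i sin u/4)σ₁ − (i(cos u−1)/4)σ₃, using θ₁ = (k − 1/k)/4. -/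
attribute [local instance] Matrix.frobeniusNormedAddCommGroup Matrix.frobeniusNormedSpace

attribute [local instance] Matrix.frobeniusNormedRing Matrix.frobeniusNormedAlgebra

/-- Gauge transformation of the x-part of the Lax pair: if `μ` satisfies
`μ_x + iθ₁[σ₃, μ] = (Q₀ + Q₁/k)μ`, then `μ̂ = G⁻¹μ` satisfies
`μ̂_x + iθ₁[σ₃, μ̂] = (Q̂₀ + kQ̂₁)μ̂`, where `G` is the rotation by `u/2` and
`θ₁ = (k − 1/k)/4`. All functions are considered at a fixed time `t`, so they
depend on `x` only, with `ut` denoting the time derivative of `u`. -/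
theorem stmt16 (k : ℂ) (hk : k ≠ 0) (θ₁ : ℂ) (hθ₁ : θ₁ = (k - k⁻¹) / 4)
    (u ux ut : ℝ → ℝ) (hu : ∀ x, HasDerivAt u (ux x) x)
    (σ₁ σ₂ σ₃ : Matrix (Fin 2) (Fin 2) ℂ)
    (hσ₁ : σ₁ = !![0, 1; 1, 0])
    (hσ₂ : σ₂ = !![0, -Complex.I; Complex.I, 0])
    (hσ₃ : σ₃ = !![1, 0; 0, -1])
    (Q₀ Q₁ Qh₀ Qh₁ G : ℝ → Matrix (Fin 2) (Fin 2) ℂ)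
    (hQ₀ : ∀ x, Q₀ x = (-(Complex.I * (ux x + ut x)) / 4) • σ₂)
    (hQ₁ : ∀ x, Q₁ x = ((Complex.I * Real.sin (u x)) / 4) • σ₁ +
      ((Complex.I * (Real.cos (u x) - 1)) / 4) • σ₃)
    (hQh₀ : ∀ x, Qh₀ x = ((Complex.I * (ux x - ut x)) / 4) • σ₂)
    (hQh₁ : ∀ x, Qh₁ x = ((Complex.I * Real.sin (u x)) / 4) • σ₁ -
      ((Complex.I * (Real.cos (u x) - 1)) / 4) • σ₃)
    (hG : ∀ x, G x = (Matrix.map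
      (!![Real.cos (u x / 2), -Real.sin (u x / 2);
          Real.sin (u x / 2), Real.cos (u x / 2)]) (fun r : ℝ => (r : ℂ))))
    (μ μ' : ℝ → Matrix (Fin 2) (Fin 2) ℂ)
    (hμ : ∀ x, HasDerivAt μ (μ' x) x)
    (hlax : ∀ x, μ' x + (Complex.I * θ₁) • (σ₃ * μ x - μ x * σ₃) =
      (Q₀ x + k⁻¹ • Q₁ x) * μ x) :
    ∃ ν' : ℝ → Matrix (Fin 2) (Fin 2) ℂ,
      (∀ x, HasDerivAt (fun y => (G y)⁻¹ * μ y) (ν' x) x) ∧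
      (∀ x, ν' x + (Complex.I * θ₁) •
          (σ₃ * ((G x)⁻¹ * μ x) - ((G x)⁻¹ * μ x) * σ₃) =
        (Qh₀ x + k • Qh₁ x) * ((G x)⁻¹ * μ x)) := by
  set E : Matrix (Fin 2) (Fin 2) ℂ := !![0, 1; -1, 0] with hE
  set Gi : ℝ → Matrix (Fin 2) (Fin 2) ℂ :=
    fun x => ((Real.cos (u x / 2) : ℂ)) • (1 : Matrix (Fin 2) (Fin 2) ℂ)
      + ((Real.sin (u x / 2) : ℂ)) • E with hGi
  set Gi' : ℝ → Matrix (Fin 2) (Fin 2) ℂ :=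
    fun x => (((-Real.sin (u x / 2) * (ux x / 2) : ℝ) : ℂ)) • (1 : Matrix (Fin 2) (Fin 2) ℂ)
      + (((Real.cos (u x / 2) * (ux x / 2) : ℝ) : ℂ)) • E with hGi'
  have hGd : ∀ x, HasDerivAt Gi (Gi' x) x := by
    intro x
    have h1 := ((hu x).div_const 2).cos
    have h2 := ((hu x).div_const 2).sin
    exact (h1.ofReal_comp.smul_const _).add (h2.ofReal_comp.smul_const _)
  have hGimat : ∀ x, Gi x = !![(Real.cos (u x / 2) : ℂ), (Real.sin (u x / 2) : ℂ);
      -(Real.sin (u x / 2) : ℂ), (Real.cos (u x / 2) : ℂ)] := by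
    intro x
    rw [hGi]
    ext i j
    fin_cases i <;> fin_cases j <;> simp [hE, Matrix.one_apply]
  have hGi'mat : ∀ x, Gi' x =
      !![-(Real.sin (u x / 2) : ℂ) * ((ux x : ℂ) / 2), (Real.cos (u x / 2) : ℂ) * ((ux x : ℂ) / 2);
        -((Real.cos (u x / 2) : ℂ) * ((ux x : ℂ) / 2)), -(Real.sin (u x / 2) : ℂ) * ((ux x : ℂ) / 2)] := by
    intro x
    rw [hGi']
    ext i j
    fin_cases i <;> fin_cases j <;>
      simp [hE, Matrix.one_apply, -Complex.ofReal_cos, -Complex.ofReal_sin] <;>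
      (push_cast [-Complex.ofReal_cos, -Complex.ofReal_sin]; ring1)
  have hcs : ∀ x, (Real.cos (u x / 2) : ℂ) ^ 2 + (Real.sin (u x / 2) : ℂ) ^ 2 = 1 := by
    intro x
    rw [← Complex.ofReal_pow, ← Complex.ofReal_pow, ← Complex.ofReal_add,
      Real.cos_sq_add_sin_sq, Complex.ofReal_one]
  have hGinv : ∀ x, (G x)⁻¹ = Gi x := by
    intro x
    apply Matrix.inv_eq_right_inv
    rw [hG, hGimat]
    ext i j
    fin_cases i <;> fin_cases j <;>
      simp [Matrix.mul_apply, Fin.sum_univ_two, Matrix.one_apply,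
        -Complex.ofReal_cos, -Complex.ofReal_sin] <;>
      (first | ring1 | linear_combination hcs x | linear_combination -(hcs x))
  have hsin : ∀ x, Real.sin (u x) = 2 * Real.sin (u x / 2) * Real.cos (u x / 2) := by
    intro x
    have h2 := congrArg Real.sin (show u x = 2 * (u x / 2) by ring)
    rw [h2, Real.sin_two_mul]
  have hcos : ∀ x, Real.cos (u x) = 1 - 2 * Real.sin (u x / 2) ^ 2 := by
    intro x
    have h2 := congrArg Real.cos (show u x = 2 * (u x / 2) by ring)
    rw [h2, Real.cos_two_mul']
    linear_combination Real.sin_sq_add_cos_sq (u x / 2)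
  have key : ∀ x, Gi' x + Gi x * (Q₀ x + k⁻¹ • Q₁ x)
      + (Complex.I * θ₁) • (σ₃ * Gi x - Gi x * σ₃) = (Qh₀ x + k • Qh₁ x) * Gi x := by
    intro x
    have hkinv : k⁻¹ = k - 4 * θ₁ := by rw [hθ₁]; ring
    rw [hQ₀ x, hQ₁ x, hQh₀ x, hQh₁ x, hσ₁, hσ₂, hσ₃, hGimat x, hGi'mat x,
      hsin x, hcos x, hkinv]
    push_cast [-Complex.ofReal_cos, -Complex.ofReal_sin]
    ext i j
    fin_cases i <;> fin_cases j <;>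
      simp [Matrix.mul_apply, Fin.sum_univ_two,
        -Complex.ofReal_cos, -Complex.ofReal_sin] <;>
      (first
        | linear_combination (-(Real.sin (u x / 2) : ℂ) * (ux x : ℂ) / 2) * Complex.I_sq
        | linear_combination (-2 * Complex.I * (Real.sin (u x / 2) : ℂ) * θ₁) * hcs x
            + ((Real.cos (u x / 2) : ℂ) * (ux x : ℂ) / 2) * Complex.I_sq
        | linear_combination (-2 * Complex.I * (Real.sin (u x / 2) : ℂ) * θ₁) * hcs x
            + (-(Real.cos (u x / 2) : ℂ) * (ux x : ℂ) / 2) * Complex.I_sq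
        | linear_combination (2 * Complex.I * (Real.sin (u x / 2) : ℂ) * θ₁) * hcs x
            + ((Real.cos (u x / 2) : ℂ) * (ux x : ℂ) / 2) * Complex.I_sq
        | linear_combination (2 * Complex.I * (Real.sin (u x / 2) : ℂ) * θ₁) * hcs x
            + (-(Real.cos (u x / 2) : ℂ) * (ux x : ℂ) / 2) * Complex.I_sq
        | linear_combination ((Real.sin (u x / 2) : ℂ) * (ux x : ℂ) / 2) * Complex.I_sq)
  refine ⟨fun x => Gi' x * μ x + Gi x * μ' x, ?_, ?_⟩
  · intro x
    have hfe : (fun y => (G y)⁻¹ * μ y) = fun y => Gi y * μ y :=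
      funext fun y => by rw [hGinv y]
    rw [hfe]
    exact (hGd x).mul (hμ x)
  · intro x
    rw [hGinv x]
    have hμ'x : μ' x = (Q₀ x + k⁻¹ • Q₁ x) * μ x
        - (Complex.I * θ₁) • (σ₃ * μ x - μ x * σ₃) := by
      rw [eq_sub_iff_add_eq]; exact hlax x
    have step : Gi' x * μ x + Gi x * μ' x + (Complex.I * θ₁) •
        (σ₃ * (Gi x * μ x) - Gi x * μ x * σ₃) =
        (Gi' x + Gi x * (Q₀ x + k⁻¹ • Q₁ x)
          + (Complex.I * θ₁) • (σ₃ * Gi x - Gi x * σ₃)) * μ x := by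
      rw [hμ'x]
      simp only [Matrix.add_mul, Matrix.sub_mul, Matrix.mul_sub, Matrix.mul_add,
        smul_sub, smul_add, mul_smul_comm, smul_mul_assoc, mul_assoc]
      abel
    rw [step, key x, mul_assoc]
end

section
/- Suppose u : [0,∞) × [0,∞) → ℝ is a C² solution of the sine-Gordon equation u_{tt} − u_{xx} + sin u = 0. Then the 1-form ω₁ = −(i/4)(−(u_x+u_t)²/2 + cos u − 1) dx + (i/4)((u_x+u_t)²/2 + cos u − 1) dt is closed, i.e. ∂_t[−(−(u_x+u_t)²/2 + cos u − 1)] = ∂_x[(u_x+u_t)²/2 + cos u − 1]. -/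
open Function

/-!
With `w = u_x + u_t`, the `t`-derivative of the left-hand side is `w (u_xt + u_tt) + u_t sin u` and
the `x`-derivative of the right-hand side is `w (u_xx + u_tx) - u_x sin u`. Since `u` is `C²`, the
mixed partials agree, so the difference is `w (u_tt - u_xx + sin u)`, which vanishes by the
sine-Gordon equation.
-/

section Partial

variable {E : Type*} [NormedAddCommGroup E] [NormedSpace ℝ E] {u : ℝ → ℝ → E} {x t : ℝ}

theorem HasFDerivAt.hasDerivAt_uncurry_left {L : ℝ × ℝ →L[ℝ] E}
    (h : HasFDerivAt (uncurry u) L (x, t)) : HasDerivAt (fun y => u y t) (L (1, 0)) x :=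
  h.comp_hasDerivAt (l := uncurry u) x ((hasDerivAt_id x).prodMk (hasDerivAt_const x t))

theorem HasFDerivAt.hasDerivAt_uncurry_right {L : ℝ × ℝ →L[ℝ] E}
    (h : HasFDerivAt (uncurry u) L (x, t)) : HasDerivAt (u x) (L (0, 1)) t :=
  h.comp_hasDerivAt (l := uncurry u) t ((hasDerivAt_const t x).prodMk (hasDerivAt_id t))

theorem DifferentiableAt.hasDerivAt_uncurry_left (h : DifferentiableAt ℝ (uncurry u) (x, t)) :
    HasDerivAt (fun y => u y t) (deriv (fun y => u y t) x) x :=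
  h.hasFDerivAt.hasDerivAt_uncurry_left.differentiableAt.hasDerivAt

theorem DifferentiableAt.hasDerivAt_uncurry_right (h : DifferentiableAt ℝ (uncurry u) (x, t)) :
    HasDerivAt (u x) (deriv (u x) t) t :=
  h.hasFDerivAt.hasDerivAt_uncurry_right.differentiableAt.hasDerivAt

theorem deriv_left_eq_fderiv_uncurry (h : DifferentiableAt ℝ (uncurry u) (x, t)) :
    deriv (fun y => u y t) x = fderiv ℝ (uncurry u) (x, t) (1, 0) :=
  h.hasFDerivAt.hasDerivAt_uncurry_left.deriv

theorem deriv_right_eq_fderiv_uncurry (h : DifferentiableAt ℝ (uncurry u) (x, t)) :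
    deriv (u x) t = fderiv ℝ (uncurry u) (x, t) (0, 1) :=
  h.hasFDerivAt.hasDerivAt_uncurry_right.deriv

variable {m n : WithTop ℕ∞}

theorem ContDiff.uncurry_deriv_left (hu : ContDiff ℝ n (uncurry u)) (hmn : m + 1 ≤ n) :
    ContDiff ℝ m (uncurry fun x t => deriv (fun y => u y t) x) := by
  have hU := hu.differentiable fun h0 => by simp [h0] at hmn
  simp only [deriv_left_eq_fderiv_uncurry (hU _)]
  exact (hu.fderiv_right hmn).clm_apply contDiff_const

theorem ContDiff.uncurry_deriv_right (hu : ContDiff ℝ n (uncurry u)) (hmn : m + 1 ≤ n) :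
    ContDiff ℝ m (uncurry fun x t => deriv (u x) t) := by
  have hU := hu.differentiable fun h0 => by simp [h0] at hmn
  simp only [deriv_right_eq_fderiv_uncurry (hU _)]
  exact (hu.fderiv_right hmn).clm_apply contDiff_const

theorem ContDiff.deriv_deriv_uncurry_comm (hu : ContDiff ℝ 2 (uncurry u)) :
    deriv (fun s => deriv (fun y => u y s) x) t = deriv (fun y => deriv (u y) t) x := by
  have hU := hu.differentiable two_ne_zero
  have hD : Differentiable ℝ (fderiv ℝ (uncurry u)) :=
    (hu.fderiv_right (m := 1) le_rfl).differentiable one_ne_zero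
  have hDv (v : ℝ × ℝ) :
      HasFDerivAt (uncurry fun x t => fderiv ℝ (uncurry u) (x, t) v)
        ((ContinuousLinearMap.apply ℝ E v).comp (fderiv ℝ (fderiv ℝ (uncurry u)) (x, t))) (x, t) :=
    (ContinuousLinearMap.apply ℝ E v).hasFDerivAt.comp _ (hD (x, t)).hasFDerivAt
  simp only [deriv_left_eq_fderiv_uncurry (hU _), deriv_right_eq_fderiv_uncurry (hU _)]
  rw [(hDv (1, 0)).hasDerivAt_uncurry_right.deriv, (hDv (0, 1)).hasDerivAt_uncurry_left.deriv]
  exact hu.contDiffAt.isSymmSndFDerivAt (by simp) _ _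

end Partial

open Set

/-- For a `C²` solution of sine-Gordon `u_{tt} − u_{xx} + sin u = 0` on the
quarter plane, the one-form `ω₁` is closed:
`∂_t[−(−(u_x+u_t)²/2 + cos u − 1)] = ∂_x[(u_x+u_t)²/2 + cos u − 1]`. -/
theorem stmt18 (u : ℝ → ℝ → ℝ)
    (hu : ContDiff ℝ 2 (fun p : ℝ × ℝ => u p.1 p.2))
    (hsg : ∀ x ∈ Ici (0:ℝ), ∀ t ∈ Ici (0:ℝ),
      deriv (fun s => deriv (fun s' => u x s') s) t
        - deriv (fun y => deriv (fun y' => u y' t) y) x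
        + Real.sin (u x t) = 0) :
    ∀ x ∈ Ici (0:ℝ), ∀ t ∈ Ici (0:ℝ),
      deriv (fun s =>
          -(-(deriv (fun y => u y s) x + deriv (u x) s) ^ 2 / 2
            + Real.cos (u x s) - 1)) t =
      deriv (fun y =>
          (deriv (fun y' => u y' t) y + deriv (u y) t) ^ 2 / 2
            + Real.cos (u y t) - 1) x := by
  intro x hx t ht
  have hU : Differentiable ℝ (uncurry u) := hu.differentiable two_ne_zero
  have hUx := (hu.uncurry_deriv_left (m := 1) le_rfl).differentiable one_ne_zero
  have hUt := (hu.uncurry_deriv_right (m := 1) le_rfl).differentiable one_ne_zero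
  have hux_t := (hUx (x, t)).hasDerivAt_uncurry_right
  have hut_t := (hUt (x, t)).hasDerivAt_uncurry_right
  have hux_x := (hUx (x, t)).hasDerivAt_uncurry_left
  have hut_x := (hUt (x, t)).hasDerivAt_uncurry_left
  have hcos_t := (hU (x, t)).hasDerivAt_uncurry_right.cos
  have hcos_x := (hU (x, t)).hasDerivAt_uncurry_left.cos
  have hdt := ((((hux_t.fun_add hut_t).fun_pow 2).fun_neg.div_const 2).fun_add hcos_t).sub_const 1
  have hdx := ((((hux_x.fun_add hut_x).fun_pow 2).div_const 2).fun_add hcos_x).sub_const 1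
  rw [hdt.fun_neg.deriv, hdx.deriv, hu.deriv_deriv_uncurry_comm]
  linear_combination (deriv (fun y => u y t) x + deriv (u x) t) * hsg x hx t ht
end
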